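/- arXiv:2209.08004 — 2 statements merged into one kernel-verified Lean document; each statement's English description precedes it below -/
import Mathlib

section
/- For every index i one has (1 − δ)/(1 + ε) ≤ (v_i/v̂_i)² and (1 − δ)(1 − ε)(v_i/v̂_i)² ≤ 1 (equivalently, √((1−δ)/(1+ε)) ≤ v_i/v̂_i ≤ √(1/((1−δ)(1−ε))) when δ < 1), where δ = min{ 1 , 4ε / ((n − 2) · min_{i ≠ j} v̂_i A_{i,j} v̂_j) }. -/
/-!
With `C i j = v̂ i * A i j * v̂ j` and `u = v / v̂`, the matrix `diag(u) C diag(u)` is doubly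
stochastic while the row sums of `C` lie in `[1 - ε, 1 + ε]`. Row `i` reads
`1 = u i * ∑ j, C i j * u j`, hence `1 ≤ u i * max u * (1 + ε)` and `u i * min u * (1 - ε) ≤ 1`.
Subtracting the rows of a minimiser `q` and a maximiser `p` of `u`, every index other than `p, q`
contributes at least `m * (u p - u q)`, `m` the least off-diagonal entry of `C`; this gives
`(n - 2) * m * (u p - u q) ≤ 2 * ε * u p`, i.e. `(1 - δ) * max u ≤ min u`, and the two bounds on
`u i ^ 2` follow.
-/

open Finset

section ScalingStability

variable {ι : Type*} [Fintype ι] {C : ι → ι → ℝ} {u : ι → ℝ} {ε m : ℝ}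

theorem sum_mul_eq_inv_of_scaling (hscale : ∀ i, ∑ j, u i * C i j * u j = 1) (i : ι) :
    ∑ j, C i j * u j = (u i)⁻¹ :=
  eq_inv_of_mul_eq_one_right <| by simpa only [mul_sum, mul_assoc] using hscale i

theorem one_le_mul_mul_one_add (hC : ∀ i j, 0 ≤ C i j) (hu : ∀ i, 0 < u i)
    (hscale : ∀ i, ∑ j, u i * C i j * u j = 1) (hrow : ∀ i, ∑ j, C i j ≤ 1 + ε)
    {p : ι} (hp : ∀ j, u j ≤ u p) (i : ι) :
    1 ≤ u i * u p * (1 + ε) :=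
  calc 1 = ∑ j, u i * C i j * u j := (hscale i).symm
    _ ≤ ∑ j, u i * C i j * u p := by
      gcongr with j
      exacts [mul_nonneg (hu i).le (hC i j), hp j]
    _ = u i * u p * ∑ j, C i j := by rw [mul_sum]; exact sum_congr rfl fun _ _ => by ring
    _ ≤ u i * u p * (1 + ε) := by gcongr; exacts [(mul_pos (hu i) (hu p)).le, hrow i]

theorem mul_mul_one_sub_le_one (hC : ∀ i j, 0 ≤ C i j) (hu : ∀ i, 0 < u i)
    (hscale : ∀ i, ∑ j, u i * C i j * u j = 1) (hrow : ∀ i, 1 - ε ≤ ∑ j, C i j)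
    {q : ι} (hq : ∀ j, u q ≤ u j) (i : ι) :
    u i * u q * (1 - ε) ≤ 1 :=
  calc u i * u q * (1 - ε) ≤ u i * u q * ∑ j, C i j := by
        gcongr; exacts [(mul_pos (hu i) (hu q)).le, hrow i]
    _ = ∑ j, u i * C i j * u q := by rw [mul_sum]; exact sum_congr rfl fun _ _ => by ring
    _ ≤ ∑ j, u i * C i j * u j := by
      gcongr with j
      exacts [mul_nonneg (hu i).le (hC i j), hq j]
    _ = 1 := hscale i

theorem card_sub_two_mul_le_sum (hC : ∀ i j, 0 ≤ C i j) (hm : 0 ≤ m)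
    (hoff : ∀ i j, i ≠ j → m ≤ C i j) {p q : ι} (hp : ∀ j, u j ≤ u p) (hq : ∀ j, u q ≤ u j) :
    ((Fintype.card ι : ℝ) - 2) * m * (u p - u q) ≤
      ∑ j, ((u p - u j) * C q j + (u j - u q) * C p j) := by
  classical
  set s := univ \ {p, q}
  have hcard : (Fintype.card ι : ℝ) - 2 ≤ s.card := by
    have h : Fintype.card ι ≤ s.card + 2 := by
      rw [← card_univ]
      exact card_le_card_sdiff_add_card.trans (Nat.add_le_add_left card_le_two _)
    rw [sub_le_iff_le_add]
    exact_mod_cast h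
  have hterm : ∀ j, 0 ≤ (u p - u j) * C q j + (u j - u q) * C p j := fun j =>
    add_nonneg (mul_nonneg (sub_nonneg.2 (hp j)) (hC q j))
      (mul_nonneg (sub_nonneg.2 (hq j)) (hC p j))
  calc ((Fintype.card ι : ℝ) - 2) * m * (u p - u q)
      ≤ s.card * (m * (u p - u q)) := by
        rw [mul_assoc]
        exact mul_le_mul_of_nonneg_right hcard (mul_nonneg hm (sub_nonneg.2 (hq p)))
    _ = ∑ j ∈ s, m * (u p - u q) := by rw [sum_const, nsmul_eq_mul]
    _ ≤ ∑ j ∈ s, ((u p - u j) * C q j + (u j - u q) * C p j) := by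
      refine sum_le_sum fun j hj => ?_
      simp only [s, mem_sdiff, mem_univ, mem_insert, mem_singleton, true_and, not_or] at hj
      have hqj := hoff q j (Ne.symm hj.2)
      have hpj := hoff p j (Ne.symm hj.1)
      -- the weights `u p - u j` and `u j - u q` are nonnegative and add up to `u p - u q`
      nlinarith [sub_nonneg.2 (hp j), sub_nonneg.2 (hq j)]
    _ ≤ ∑ j, ((u p - u j) * C q j + (u j - u q) * C p j) :=
      sum_le_sum_of_subset_of_nonneg (subset_univ s) fun j _ _ => hterm j

theorem card_sub_two_mul_sub_le (hC : ∀ i j, 0 ≤ C i j) (hu : ∀ i, 0 < u i)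
    (hscale : ∀ i, ∑ j, u i * C i j * u j = 1) (hrow_le : ∀ i, ∑ j, C i j ≤ 1 + ε)
    (hrow_ge : ∀ i, 1 - ε ≤ ∑ j, C i j) (hm : 0 ≤ m) (hoff : ∀ i j, i ≠ j → m ≤ C i j)
    {p q : ι} (hp : ∀ j, u j ≤ u p) (hq : ∀ j, u q ≤ u j) :
    ((Fintype.card ι : ℝ) - 2) * m * (u p - u q) ≤ 2 * ε * u p := by
  have hrow_q : ∑ j, (u p - u j) * C q j = u p * ∑ j, C q j - (u q)⁻¹ := by
    rw [← sum_mul_eq_inv_of_scaling hscale q, mul_sum, ← sum_sub_distrib]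
    exact sum_congr rfl fun _ _ => by ring
  have hrow_p : ∑ j, (u j - u q) * C p j = (u p)⁻¹ - u q * ∑ j, C p j := by
    rw [← sum_mul_eq_inv_of_scaling hscale p, mul_sum, ← sum_sub_distrib]
    exact sum_congr rfl fun _ _ => by ring
  have hinv : (u p - u q) * (1 - ε) ≤ (u q)⁻¹ - (u p)⁻¹ := by
    have hpq := mul_pos (hu p) (hu q)
    rw [inv_sub_inv (hu q).ne' (hu p).ne', mul_comm (u q), le_div_iff₀ hpq]
    calc (u p - u q) * (1 - ε) * (u p * u q) = (u p - u q) * (u p * u q * (1 - ε)) := by ring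
      _ ≤ (u p - u q) * 1 := by
        gcongr
        exacts [sub_nonneg.2 (hq p), mul_mul_one_sub_le_one hC hu hscale hrow_ge hq p]
      _ = u p - u q := mul_one _
  have hsum := card_sub_two_mul_le_sum hC hm hoff hp hq
  rw [sum_add_distrib, hrow_q, hrow_p] at hsum
  nlinarith [mul_le_mul_of_nonneg_left (hrow_le q) (hu p).le,
    mul_le_mul_of_nonneg_left (hrow_ge p) (hu q).le]

theorem one_sub_min_mul_le {K x y ε : ℝ} (hK : 0 < K) (hε : 0 ≤ ε) (hx : 0 ≤ x) (hy : 0 ≤ y)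
    (h : K * (x - y) ≤ 2 * ε * x) :
    (1 - min 1 (4 * ε / K)) * x ≤ y := by
  rcases le_total 1 (4 * ε / K) with h1 | h1
  · rw [min_eq_left h1, sub_self, zero_mul]
    exact hy
  · rw [min_eq_right h1, sub_mul, sub_le_iff_le_add, div_mul_eq_mul_div, ← sub_le_iff_le_add',
      le_div_iff₀ hK]
    nlinarith [mul_nonneg hε hx]

theorem scaling_factor_sq_bounds (hcard : 2 < Fintype.card ι) (hC : ∀ i j, 0 ≤ C i j)
    (hu : ∀ i, 0 < u i) (hscale : ∀ i, ∑ j, u i * C i j * u j = 1)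
    (hrow_le : ∀ i, ∑ j, C i j ≤ 1 + ε) (hrow_ge : ∀ i, 1 - ε ≤ ∑ j, C i j) (hε0 : 0 ≤ ε)
    (hε1 : ε ≤ 1) (hm : 0 < m) (hoff : ∀ i j, i ≠ j → m ≤ C i j) (i : ι) :
    (1 - min 1 (4 * ε / (((Fintype.card ι : ℝ) - 2) * m))) / (1 + ε) ≤ u i ^ 2 ∧
      (1 - min 1 (4 * ε / (((Fintype.card ι : ℝ) - 2) * m))) * (1 - ε) * u i ^ 2 ≤ 1 := by
  set δ := min 1 (4 * ε / (((Fintype.card ι : ℝ) - 2) * m))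
  have : Nonempty ι := ⟨i⟩
  obtain ⟨p, hp⟩ := Finite.exists_max u
  obtain ⟨q, hq⟩ := Finite.exists_min u
  have hK : 0 < ((Fintype.card ι : ℝ) - 2) * m := by
    refine mul_pos ?_ hm
    rw [sub_pos]
    exact_mod_cast hcard
  have hδ : 0 ≤ 1 - δ := sub_nonneg.2 (min_le_left _ _)
  have hkey : (1 - δ) * u p ≤ u q := one_sub_min_mul_le hK hε0 (hu p).le (hu q).le
    (card_sub_two_mul_sub_le hC hu hscale hrow_le hrow_ge hm.le hoff hp hq)
  constructor
  · rw [div_le_iff₀ (by linarith)]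
    calc 1 - δ ≤ (1 - δ) * (u i * u p * (1 + ε)) :=
          le_mul_of_one_le_right hδ (one_le_mul_mul_one_add hC hu hscale hrow_le hp i)
      _ = u i * (1 + ε) * ((1 - δ) * u p) := by ring
      _ ≤ u i * (1 + ε) * u i := by
        gcongr
        · exact mul_nonneg (hu i).le (by linarith)
        · exact hkey.trans (hq i)
      _ = u i ^ 2 * (1 + ε) := by ring
  · calc (1 - δ) * (1 - ε) * u i ^ 2 = u i * (1 - ε) * ((1 - δ) * u i) := by ring
      _ ≤ u i * (1 - ε) * u q := by
        gcongr
        · exact mul_nonneg (hu i).le (by linarith)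
        · exact (mul_le_mul_of_nonneg_left (hp i) hδ).trans hkey
      _ = u i * u q * (1 - ε) := by ring
      _ ≤ 1 := mul_mul_one_sub_le_one hC hu hscale hrow_ge hq i

end ScalingStability

/-- Stability of doubly stochastic scaling factors.
For every index `i`, `(1 - δ)/(1 + ε) ≤ (v i / v̂ i)²` and
`(1 - δ)(1 - ε)(v i / v̂ i)² ≤ 1`, where
`δ = min 1 (4ε / ((n - 2) · min_{i ≠ j} v̂ i * A i j * v̂ j))`. -/
theorem doubly_stochastic_scaling_factor_stability
    {n : ℕ} (hn : 3 ≤ n)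
    (A : Fin n → Fin n → ℝ)
    (hA_nonneg : ∀ i j, 0 ≤ A i j)
    (hA_offdiag : ∀ i j, i ≠ j → 0 < A i j)
    (v : Fin n → ℝ) (hv : ∀ i, 0 < v i)
    (hds : ∀ i, ∑ j, v i * A i j * v j = 1)
    (ε : ℝ) (hε0 : 0 < ε) (hε1 : ε < 1)
    (vh : Fin n → ℝ) (hvh : ∀ i, 0 < vh i)
    (happrox : ∀ i, |∑ j, vh i * A i j * vh j - 1| ≤ ε)
    (δ : ℝ)
    (hδ : δ = min 1 (4 * ε / (((n : ℝ) - 2) *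
      Finset.inf' (Finset.univ.filter (fun p : Fin n × Fin n => p.1 ≠ p.2))
        ⟨(⟨0, by omega⟩, ⟨1, by omega⟩), by
          simp only [Finset.mem_filter, Finset.mem_univ, true_and]
          exact Fin.ne_of_val_ne (by simp)⟩
        (fun p => vh p.1 * A p.1 p.2 * vh p.2)))) :
    ∀ i, (1 - δ) / (1 + ε) ≤ (v i / vh i) ^ 2 ∧
      (1 - δ) * (1 - ε) * (v i / vh i) ^ 2 ≤ 1 := by
  intro i
  have hne : (univ.filter fun p : Fin n × Fin n => p.1 ≠ p.2).Nonempty :=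
    ⟨(⟨0, by omega⟩, ⟨1, by omega⟩), by simp⟩
  generalize hM : inf' _ hne (fun p => vh p.1 * A p.1 p.2 * vh p.2) = M at hδ
  have hoff : ∀ a b, a ≠ b → M ≤ vh a * A a b * vh b := fun a b hab =>
    hM ▸ inf'_le (fun p : Fin n × Fin n => vh p.1 * A p.1 p.2 * vh p.2) (b := (a, b))
      (by simpa using hab)
  have hM_pos : 0 < M := hM ▸ (lt_inf'_iff _).2 fun p hp =>
    mul_pos (mul_pos (hvh _) (hA_offdiag _ _ (by simpa using hp))) (hvh _)
  have hscale : ∀ a, ∑ b, v a / vh a * (vh a * A a b * vh b) * (v b / vh b) = 1 := fun a =>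
    (sum_congr rfl fun b _ => by field_simp [(hvh a).ne', (hvh b).ne']).trans (hds a)
  have h := scaling_factor_sq_bounds (C := fun a b => vh a * A a b * vh b)
    (u := fun a => v a / vh a) (by rw [Fintype.card_fin]; omega)
    (fun a b => mul_nonneg (mul_nonneg (hvh a).le (hA_nonneg a b)) (hvh b).le)
    (fun a => div_pos (hv a) (hvh a)) hscale
    (fun a => by linarith [(abs_le.1 (happrox a)).2])
    (fun a => by linarith [(abs_le.1 (happrox a)).1])
    hε0.le hε1.le hM_pos hoff i
  rwa [Fintype.card_fin, ← hδ] at h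
end

section
/- Superlevel set bound for a Gaussian-kernel scaling function (abstract form of the boundedness lemma for ρ_ε): let m ≥ 1, ε > 0, Z > 0, let μ be a finite Borel measure on ℝ^m, and let ρ : ℝ^m → ℝ be a continuous function with ρ(x) > 0 for every x in the (topological) support of μ, satisfying the scaling equation ρ(x) · ∫ exp( −‖x − y‖²/ε ) ρ(y) dμ(y) = Z for every x in the support of μ. Suppose κ is a natural number such that every finite set of points in the support of μ whose pairwise distances all exceed 2√ε has cardinality at most κ. Then for every t > 0, μ{ x : ρ(x) > t } ≤ e⁴ · κ · Z / t². -/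
/-!
For `x` in the support with `ρ x > t`, the scaling equation says that the Gaussian average
`∫ exp(-‖x - y‖²/ε) ρ y dμ(y)` equals `Z / ρ x < Z / t`. On the closed ball of radius `2√ε`
about `x` the kernel is at least `e⁻⁴`, so Markov's inequality bounds the mass of
`{ρ > t}` in that ball by `e⁴ Z / t²`. A maximal `2√ε`-separated subset of `{ρ > t}` inside
the support has at most `κ` points, and the balls of radius `2√ε` about its points cover it.
-/

open MeasureTheory

/-- The (topological) support of a Borel measure: the set of points all of whose open
neighborhoods have positive measure.  It is the smallest closed set of full measure
for Borel measures on second-countable spaces such as `ℝ^m`. -/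
def measureSupport {X : Type*} [TopologicalSpace X] [MeasurableSpace X]
    (μ : Measure X) : Set X :=
  {x | ∀ U : Set X, IsOpen U → x ∈ U → 0 < μ U}

open Metric Real
open scoped ENNReal NNReal

theorem measureSupport_eq_support {X : Type*} [TopologicalSpace X] [MeasurableSpace X]
    (μ : Measure X) : measureSupport μ = μ.support := by
  rw [Measure.support_eq_forall_isOpen]
  ext x
  exact forall_congr' fun U => forall_comm

theorem MeasureTheory.meas_ge_le_ofReal_integral_div {α : Type*} [MeasurableSpace α]
    {μ : Measure α} {f : α → ℝ} (hf : 0 ≤ᵐ[μ] f) (hfi : Integrable f μ) {c : ℝ} (hc : 0 < c) :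
    μ {x | c ≤ f x} ≤ ENNReal.ofReal ((∫ x, f x ∂μ) / c) := by
  calc μ {x | c ≤ f x} ≤ μ {x | ENNReal.ofReal c ≤ ENNReal.ofReal (f x)} :=
        measure_mono fun x hx => ENNReal.ofReal_le_ofReal hx
    _ ≤ (∫⁻ x, ENNReal.ofReal (f x) ∂μ) / ENNReal.ofReal c :=
        meas_ge_le_lintegral_div hfi.1.aemeasurable.ennreal_ofReal
          (ENNReal.ofReal_pos.2 hc).ne' ENNReal.ofReal_ne_top
    _ = ENNReal.ofReal ((∫ x, f x ∂μ) / c) := by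
        rw [← ofReal_integral_eq_lintegral_ofReal hfi hf,
          ENNReal.ofReal_div_of_pos hc]

namespace Metric

variable {X : Type*} [PseudoEMetricSpace X] {δ : ℝ≥0} {A : Set X} {κ : ℕ}

theorem packingNumber_le_of_forall_finset_card_le
    (h : ∀ S : Finset X, ↑S ⊆ A → IsSeparated δ (S : Set X) → S.card ≤ κ) :
    packingNumber δ A ≤ κ := by
  refine iSup₂_le fun C hCA => iSup_le fun hC => ?_
  rcases C.finite_or_infinite with hfin | hinf
  · rw [← hfin.coe_toFinset, Set.encard_coe_eq_coe_finsetCard]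
    exact_mod_cast h _ (by simpa using hCA) (by simpa using hC)
  · obtain ⟨S, hSC, hS⟩ := hinf.exists_subset_card_eq (κ + 1)
    have := h S (hSC.trans hCA) (hC.subset hSC)
    omega

theorem measure_le_mul_of_packingNumber_le [MeasurableSpace X] {μ : Measure X} {c : ℝ≥0∞}
    (hκ : packingNumber δ A ≤ κ) (hball : ∀ x ∈ A, μ (A ∩ closedEBall x δ) ≤ c) :
    μ A ≤ κ * c := by
  have hfin : packingNumber δ A ≠ ⊤ := ne_top_of_le_ne_top (ENat.natCast_ne_top κ) hκ
  set C := maximalSeparatedSet δ A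
  have hCcard : C.encard ≤ κ := (encard_maximalSeparatedSet hfin).trans_le hκ
  have hCfin : C.Finite := Set.finite_of_encard_le_coe hCcard
  have hcover : A ⊆ ⋃ y ∈ hCfin.toFinset, A ∩ closedEBall y δ := by
    intro x hx
    obtain ⟨y, hyC, hxy⟩ := isCover_maximalSeparatedSet hfin hx
    exact Set.mem_biUnion (hCfin.mem_toFinset.2 hyC) ⟨hx, hxy⟩
  calc μ A ≤ ∑ y ∈ hCfin.toFinset, μ (A ∩ closedEBall y δ) :=
        (measure_mono hcover).trans (measure_biUnion_finset_le _ _)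
    _ ≤ ∑ _y ∈ hCfin.toFinset, c := Finset.sum_le_sum fun y hy =>
        hball y (maximalSeparatedSet_subset (hCfin.mem_toFinset.1 hy))
    _ ≤ κ * c := by
        rw [Finset.sum_const, nsmul_eq_mul]
        gcongr
        rw [← hCfin.coe_toFinset, Set.encard_coe_eq_coe_finsetCard] at hCcard
        exact_mod_cast hCcard

end Metric

theorem exp_neg_four_le_exp_neg_sq_div {ε d : ℝ} (hε : 0 < ε) (hd₀ : 0 ≤ d)
    (hd : d ≤ 2 * √ε) : exp (-4) ≤ exp (-d ^ 2 / ε) := by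
  have hsq : d ^ 2 ≤ 4 * ε := by
    calc d ^ 2 ≤ (2 * √ε) ^ 2 := pow_le_pow_left₀ hd₀ hd 2
      _ = 4 * ε := by rw [mul_pow, sq_sqrt hε.le]; norm_num
  rw [exp_le_exp, neg_div, neg_le_neg_iff, div_le_iff₀ hε]
  linarith

theorem measure_superlevel_inter_closedBall_le {E : Type*} [SeminormedAddCommGroup E]
    [MeasurableSpace E] {μ : Measure E} {ρ : E → ℝ} {ε Z t : ℝ} {x : E}
    (hε : 0 < ε) (hZ : 0 < Z) (ht : 0 < t) (hρ : 0 ≤ᵐ[μ] ρ)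
    (hscal : ρ x * ∫ y, exp (-‖x - y‖ ^ 2 / ε) * ρ y ∂μ = Z) (hx : t < ρ x) :
    μ ({y | t < ρ y} ∩ closedBall x (2 * √ε)) ≤ ENNReal.ofReal (exp 4 * Z / t ^ 2) := by
  set f : E → ℝ := fun y => exp (-‖x - y‖ ^ 2 / ε) * ρ y
  have hf : 0 ≤ᵐ[μ] f := hρ.mono fun y hy => mul_nonneg (exp_pos _).le hy
  -- a non-integrable integrand would have Bochner integral `0`, contradicting `Z ≠ 0`
  have hfi : Integrable f μ :=
    Integrable.of_integral_ne_zero (right_ne_zero_of_mul (hscal.trans_ne hZ.ne'))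
  have hint : ∫ y, f y ∂μ ≤ Z / t := by
    rw [eq_div_of_mul_eq (ht.trans hx).ne' ((mul_comm _ _).trans hscal)]
    exact div_le_div_of_nonneg_left hZ.le ht hx.le
  have hsub : {y | t < ρ y} ∩ closedBall x (2 * √ε) ⊆ {y | exp (-4) * t ≤ f y} := by
    rintro y ⟨hty, hy⟩
    rw [mem_closedBall, dist_comm, dist_eq_norm] at hy
    exact mul_le_mul (exp_neg_four_le_exp_neg_sq_div hε (norm_nonneg _) hy) hty.le ht.le
      (exp_pos _).le
  calc μ ({y | t < ρ y} ∩ closedBall x (2 * √ε))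
      ≤ ENNReal.ofReal ((∫ y, f y ∂μ) / (exp (-4) * t)) :=
        (measure_mono hsub).trans (meas_ge_le_ofReal_integral_div hf hfi (by positivity))
    _ ≤ ENNReal.ofReal (exp 4 * Z / t ^ 2) := by
        apply ENNReal.ofReal_le_ofReal
        calc (∫ y, f y ∂μ) / (exp (-4) * t) ≤ Z / t / (exp (-4) * t) := by gcongr
          _ = exp 4 * Z / t ^ 2 := by rw [exp_neg]; field_simp

theorem scaling_function_superlevel_bound_general
    {m : ℕ} {ε Z : ℝ} (hε : 0 < ε) (hZ : 0 < Z)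
    (μ : Measure (EuclideanSpace ℝ (Fin m)))
    (ρ : EuclideanSpace ℝ (Fin m) → ℝ)
    (hρpos : ∀ x ∈ measureSupport μ, 0 < ρ x)
    (hscal : ∀ x ∈ measureSupport μ,
      ρ x * ∫ y, Real.exp (-‖x - y‖ ^ 2 / ε) * ρ y ∂μ = Z)
    (κ : ℕ)
    (hκ : ∀ S : Finset (EuclideanSpace ℝ (Fin m)),
      (∀ x ∈ S, x ∈ measureSupport μ) →
      (∀ x ∈ S, ∀ y ∈ S, x ≠ y → 2 * Real.sqrt ε < dist x y) →
      S.card ≤ κ) :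
    ∀ t : ℝ, 0 < t →
      μ {x | t < ρ x} ≤ ENNReal.ofReal (Real.exp 4 * κ * Z / t ^ 2) := by
  intro t ht
  rw [measureSupport_eq_support] at hρpos hscal hκ
  set δ : ℝ≥0 := ⟨2 * √ε, by positivity⟩
  set s := {x | t < ρ x} ∩ μ.support
  have hρ : 0 ≤ᵐ[μ] ρ :=
    Filter.eventually_of_mem Measure.support_mem_ae fun x hx => (hρpos x hx).le
  have hpack : packingNumber δ s ≤ κ := packingNumber_le_of_forall_finset_card_le
    fun S hS hsep => hκ S (fun x hx => (hS hx).2) fun x hx y hy hxy => by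
      have hδ : (δ : ℝ≥0∞) < edist x y := hsep hx hy hxy
      rwa [edist_dist, ENNReal.coe_lt_ofReal] at hδ
  have hball : ∀ x ∈ s, μ (s ∩ closedEBall x δ) ≤ ENNReal.ofReal (exp 4 * Z / t ^ 2) := by
    intro x hx
    rw [closedEBall_coe]
    exact (measure_mono (Set.inter_subset_inter_left _ Set.inter_subset_left)).trans
      (measure_superlevel_inter_closedBall_le hε hZ ht hρ (hscal x hx.2) hx.1)
  calc μ {x | t < ρ x} = μ s := (measure_inter_conull Measure.measure_compl_support).symm
    _ ≤ κ * ENNReal.ofReal (exp 4 * Z / t ^ 2) := measure_le_mul_of_packingNumber_le hpack hball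
    _ = ENNReal.ofReal (exp 4 * κ * Z / t ^ 2) := by
        rw [← ENNReal.ofReal_natCast, ← ENNReal.ofReal_mul (Nat.cast_nonneg κ)]
        congr 1
        ring

/-- Superlevel set bound for a Gaussian-kernel scaling function.  If
`ρ` is continuous, positive on the support of the finite Borel measure `μ`, satisfies
the scaling equation `ρ(x) · ∫ exp(−‖x − y‖²/ε) ρ(y) dμ(y) = Z` on the support of `μ`,
and every finite subset of the support whose pairwise distances all exceed `2√ε` has
cardinality at most `κ`, then `μ{x : ρ(x) > t} ≤ e⁴ κ Z / t²` for every `t > 0`. -/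
theorem scaling_function_superlevel_bound
    {m : ℕ} (hm : 1 ≤ m) {ε Z : ℝ} (hε : 0 < ε) (hZ : 0 < Z)
    (μ : Measure (EuclideanSpace ℝ (Fin m))) [IsFiniteMeasure μ]
    (ρ : EuclideanSpace ℝ (Fin m) → ℝ) (hρcont : Continuous ρ)
    (hρpos : ∀ x ∈ measureSupport μ, 0 < ρ x)
    (hscal : ∀ x ∈ measureSupport μ,
      ρ x * ∫ y, Real.exp (-‖x - y‖ ^ 2 / ε) * ρ y ∂μ = Z)
    (κ : ℕ)
    (hκ : ∀ S : Finset (EuclideanSpace ℝ (Fin m)),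
      (∀ x ∈ S, x ∈ measureSupport μ) →
      (∀ x ∈ S, ∀ y ∈ S, x ≠ y → 2 * Real.sqrt ε < dist x y) →
      S.card ≤ κ) :
    ∀ t : ℝ, 0 < t →
      μ {x | t < ρ x} ≤ ENNReal.ofReal (Real.exp 4 * κ * Z / t ^ 2) :=
  scaling_function_superlevel_bound_general hε hZ μ ρ hρpos hscal κ hκ
end
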